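/- arXiv:1802.06170 — 2 statements merged into one kernel-verified Lean document; each statement's English description precedes it below -/
import Mathlib

section
/- Fix a real number p with 0 < p ≤ 1. For each n, equip the space of functions f : Sym (Fin n) 3 → Bool with the product measure in which each coordinate is Bernoulli(p) (i.e., each size-3 multiset of atoms is independently declared mandatory with probability p). Then the probability of the event "for all atoms a, b, c, x, y, if the cycles {a,b,c} and {x,y,c} are both mandatory, then there exists an atom z such that the cycles {a,x,z} and {b,y,z} are both mandatory" tends to 1 as n → ∞. -/
open MeasureTheory

/-- The Bernoulli(p) measure on `Bool`: `true` with probability `p`,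
`false` with probability `1 - p`. -/
noncomputable def bernoulliBool (p : ℝ) : Measure Bool :=
  p.toNNReal • Measure.dirac true + (1 - p).toNNReal • Measure.dirac false

/-- The product measure on cycle assignments `Sym (Fin n) 3 → Bool` in which each
size-3 multiset of atoms (diversity cycle) is independently mandatory with probability `p`. -/
noncomputable def cycleMeasure (n : ℕ) (p : ℝ) : Measure (Sym (Fin n) 3 → Bool) :=
  Measure.pi fun _ => bernoulliBool p

/-- The size-3 multiset `{a, b, c}` as an element of `Sym (Fin n) 3`. -/
def cyc {n : ℕ} (a b c : Fin n) : Sym (Fin n) 3 :=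
  a ::ₛ b ::ₛ c ::ₛ Sym.nil

/-! For fixed `a, b, x, y`, the events "`{a,x,z}` and `{b,y,z}` are both mandatory", for `z`
outside `{a,b,x,y}`, are determined by pairwise disjoint sets of at most two cycles. Hence they are
independent, each of probability at least `p²`, and none of them occurs with probability at most
`(1 - p²)^(n-4)`. A union bound over the `n⁴` choices of `a, b, x, y` bounds the probability of
failure by `n⁴ (1 - p²)^(n-4) → 0`. -/

open Function Filter Topology

theorem MeasureTheory.Measure.pi_map_restrict_pairwiseDisjoint {J κ α : Type*} [Fintype J]
    [Fintype κ] [MeasurableSpace α] (ν : Measure α) [IsProbabilityMeasure ν]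
    {S : κ → Finset J} (hS : Pairwise (Disjoint on S)) :
    (Measure.pi fun _ : J => ν).map (fun f k (j : S k) => f j) =
      Measure.pi fun k => Measure.pi fun _ : S k => ν := by
  have hinj : Injective fun q : (k : κ) × S k => (q.2 : J) := by
    rintro ⟨k, j, hj⟩ ⟨k', j', hj'⟩ (rfl : j = j')
    obtain rfl : k = k' := by
      by_contra hk
      exact Finset.disjoint_left.1 (hS hk) hj hj'
    rfl
  have hcomp : (fun (f : J → α) k (j : S k) => f j) =
      MeasurableEquiv.piCurry (fun k (_ : S k) => α) ∘ fun f q => f q.2 := rfl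
  rw [hcomp, ← map_map (by fun_prop) (by fun_prop), ← infinitePi_eq_pi,
    Measure.map_infinitePi_infinitePi_of_inj hinj,
    infinitePi_map_piCurry (fun _ _ => ν), infinitePi_eq_pi]
  simp_rw [infinitePi_eq_pi]

theorem MeasureTheory.Measure.pi_forall_exists_notMem {J κ α : Type*} [Fintype J] [Fintype κ]
    [MeasurableSpace α] (ν : Measure α) [IsProbabilityMeasure ν]
    {S : κ → Finset J} (hS : Pairwise (Disjoint on S)) {t : Set α} (ht : MeasurableSet t) :
    Measure.pi (fun _ : J => ν) {f | ∀ k, ∃ j ∈ S k, f j ∉ t} = ∏ k, (1 - ν t ^ (S k).card) := by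
  have hpre : {f : J → α | ∀ k, ∃ j ∈ S k, f j ∉ t} =
      (fun f k (j : S k) => f j) ⁻¹' Set.univ.pi fun k => (Set.univ.pi fun _ => t)ᶜ := by
    ext f
    simp
  have hmeas : MeasurableSet (Set.univ.pi fun k => (Set.univ.pi fun (_ : S k) => t)ᶜ) :=
    .univ_pi fun _ => (MeasurableSet.univ_pi fun _ => ht).compl
  rw [hpre, ← map_apply (by fun_prop) hmeas, Measure.pi_map_restrict_pairwiseDisjoint ν hS,
    Measure.pi_pi]
  refine Finset.prod_congr rfl fun k _ => ?_
  rw [prob_compl_eq_one_sub (.univ_pi fun _ => ht), Measure.pi_pi, Finset.prod_const,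
    Finset.card_univ, Fintype.card_coe]

theorem isProbabilityMeasure_bernoulliBool {p : ℝ} (hp0 : 0 ≤ p) (hp1 : p ≤ 1) :
    IsProbabilityMeasure (bernoulliBool p) := by
  constructor
  simp only [bernoulliBool, Measure.coe_add, Measure.coe_smul, Pi.add_apply, Pi.smul_apply,
    measure_univ, ENNReal.smul_def, smul_eq_mul, mul_one]
  rw [← ENNReal.coe_add, ← Real.toNNReal_add hp0 (sub_nonneg.2 hp1)]
  simp

theorem bernoulliBool_true (p : ℝ) : bernoulliBool p {true} = ENNReal.ofReal p := by
  simp [bernoulliBool, ENNReal.smul_def, - Measure.coe_nnreal_smul, ENNReal.ofReal]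

theorem eq_of_cyc_eq_cyc {n : ℕ} {a b c d z w : Fin n} (h : cyc a b z = cyc c d w)
    (hwa : w ≠ a) (hwb : w ≠ b) : w = z := by
  have hw : w ∈ cyc a b z := h ▸ by simp [cyc]
  simpa [cyc, hwa, hwb] using hw

theorem isProbabilityMeasure_cycleMeasure (n : ℕ) {p : ℝ} (hp0 : 0 ≤ p) (hp1 : p ≤ 1) :
    IsProbabilityMeasure (cycleMeasure n p) := by
  have := isProbabilityMeasure_bernoulliBool hp0 hp1
  unfold cycleMeasure
  infer_instance

def noWitness {n : ℕ} (a b x y : Fin n) : Set (Sym (Fin n) 3 → Bool) :=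
  {f | ∀ z, ¬ (f (cyc a x z) = true ∧ f (cyc b y z) = true)}

theorem cycleMeasure_noWitness_le {n : ℕ} {p : ℝ} (hp0 : 0 ≤ p) (hp1 : p ≤ 1)
    (a b x y : Fin n) :
    cycleMeasure n p (noWitness a b x y) ≤ (1 - ENNReal.ofReal p ^ 2) ^ (n - 4) := by
  have := isProbabilityMeasure_bernoulliBool hp0 hp1
  let K : Finset (Fin n) := {a, b, x, y}ᶜ
  let S : K → Finset (Sym (Fin n) 3) := fun z => {cyc a x z, cyc b y z}
  have hS : Pairwise (Disjoint on S) := by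
    rintro z w hzw
    have hw : (w : Fin n) ∉ ({a, b, x, y} : Finset (Fin n)) := Finset.mem_compl.1 w.2
    simp only [Finset.mem_insert, Finset.mem_singleton, not_or] at hw
    refine Finset.disjoint_left.2 fun j hjz hjw => hzw (Subtype.ext ?_)
    simp only [S, Finset.mem_insert, Finset.mem_singleton] at hjz hjw
    rcases hjz with rfl | rfl
    · rcases hjw with h | h <;> exact (eq_of_cyc_eq_cyc h hw.1 hw.2.2.1).symm
    · rcases hjw with h | h <;> exact (eq_of_cyc_eq_cyc h hw.2.1 hw.2.2.2).symm
  have hsub : noWitness a b x y ⊆ {f | ∀ z, ∃ j ∈ S z, f j ∉ ({true} : Set Bool)} := by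
    intro f hf z
    by_contra! h
    exact hf z ⟨h _ (by simp [S]), h _ (by simp [S])⟩
  have hcard : n - 4 ≤ Fintype.card K := by
    rw [Fintype.card_coe, Finset.card_compl, Fintype.card_fin]
    have := Finset.card_le_four (a := a) (b := b) (c := x) (d := y)
    omega
  calc cycleMeasure n p (noWitness a b x y)
      ≤ ∏ z, (1 - bernoulliBool p {true} ^ (S z).card) :=
        (measure_mono hsub).trans_eq (Measure.pi_forall_exists_notMem _ hS (by simp))
    _ ≤ ∏ _z : K, (1 - ENNReal.ofReal p ^ 2) := by
        refine Finset.prod_le_prod' fun z _ => tsub_le_tsub_left ?_ 1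
        rw [bernoulliBool_true]
        exact pow_le_pow_right_of_le_one' (ENNReal.ofReal_le_one.2 hp1) Finset.card_le_two
    _ ≤ (1 - ENNReal.ofReal p ^ 2) ^ (n - 4) := by
        rw [Finset.prod_const, Finset.card_univ]
        exact pow_le_pow_right_of_le_one' tsub_le_self hcard

theorem cycleMeasure_compl_le {n : ℕ} {p : ℝ} (hp0 : 0 ≤ p) (hp1 : p ≤ 1) :
    cycleMeasure n p {f | ∀ a b c x y : Fin n, f (cyc a b c) = true → f (cyc x y c) = true →
        ∃ z : Fin n, f (cyc a x z) = true ∧ f (cyc b y z) = true}ᶜ ≤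
      ENNReal.ofReal (n ^ 4 * (1 - p ^ 2) ^ (n - 4)) := by
  have hsub : {f | ∀ a b c x y : Fin n, f (cyc a b c) = true → f (cyc x y c) = true →
        ∃ z : Fin n, f (cyc a x z) = true ∧ f (cyc b y z) = true}ᶜ ⊆
      ⋃ q : Fin n × Fin n × Fin n × Fin n, noWitness q.1 q.2.1 q.2.2.1 q.2.2.2 := by
    intro f hf
    simp only [Set.mem_compl_iff, Set.mem_ofPred_eq, not_forall] at hf
    obtain ⟨a, b, c, x, y, -, -, h⟩ := hf
    exact Set.mem_iUnion.2 ⟨(a, b, x, y), fun z hz => h ⟨z, hz⟩⟩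
  calc _ ≤ ∑ q : Fin n × Fin n × Fin n × Fin n,
          cycleMeasure n p (noWitness q.1 q.2.1 q.2.2.1 q.2.2.2) :=
        (measure_mono hsub).trans (measure_iUnion_fintype_le _ _)
    _ ≤ ∑ _q : Fin n × Fin n × Fin n × Fin n, (1 - ENNReal.ofReal p ^ 2) ^ (n - 4) :=
        Finset.sum_le_sum fun q _ => cycleMeasure_noWitness_le hp0 hp1 _ _ _ _
    _ = ENNReal.ofReal (n ^ 4 * (1 - p ^ 2) ^ (n - 4)) := by
        have hq : 0 ≤ 1 - p ^ 2 := by nlinarith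
        rw [Finset.sum_const, Finset.card_univ, nsmul_eq_mul, ENNReal.ofReal_mul (by positivity),
          ENNReal.ofReal_pow hq, ENNReal.ofReal_sub _ (sq_nonneg p), ENNReal.ofReal_one,
          ENNReal.ofReal_pow hp0, ENNReal.ofReal_pow (Nat.cast_nonneg n), ENNReal.ofReal_natCast]
        simp only [Fintype.card_prod, Fintype.card_fin]
        push_cast
        ring

theorem tendsto_pow_mul_pow_sub_atTop_nhds_zero (k m : ℕ) {t : ℝ} (h0 : 0 ≤ t) (h1 : t < 1) :
    Tendsto (fun n : ℕ => (n : ℝ) ^ k * t ^ (n - m)) atTop (𝓝 0) := by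
  rw [← tendsto_add_atTop_iff_nat m]
  have hlim := (tendsto_pow_const_mul_const_pow_of_lt_one k h0 h1).const_mul ((m + 1 : ℝ) ^ k)
  rw [mul_zero] at hlim
  refine squeeze_zero' (Eventually.of_forall fun n => by positivity) ?_ hlim
  filter_upwards [eventually_ge_atTop 1] with n hn
  rw [Nat.add_sub_cancel, Nat.cast_add, ← mul_assoc, ← mul_pow]
  have hn' : (1 : ℝ) ≤ n := by exact_mod_cast hn
  have hm : (0 : ℝ) ≤ m := Nat.cast_nonneg m
  gcongr
  nlinarith

theorem stmt0 (p : ℝ) (hp0 : 0 < p) (hp1 : p ≤ 1) :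
    Filter.Tendsto
      (fun n : ℕ => cycleMeasure n p
        {f | ∀ a b c x y : Fin n,
          f (cyc a b c) = true → f (cyc x y c) = true →
            ∃ z : Fin n, f (cyc a x z) = true ∧ f (cyc b y z) = true})
      Filter.atTop (nhds 1) := by
  have (n : ℕ) := isProbabilityMeasure_cycleMeasure n hp0.le hp1
  have hbound := tendsto_pow_mul_pow_sub_atTop_nhds_zero 4 4
    (by nlinarith : 0 ≤ 1 - p ^ 2) (by nlinarith : 1 - p ^ 2 < 1)
  have hcompl := tendsto_of_tendsto_of_tendsto_of_le_of_le tendsto_const_nhds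
    (by simpa using ENNReal.tendsto_ofReal hbound) (fun _ => zero_le)
    (fun n => cycleMeasure_compl_le (n := n) hp0.le hp1)
  have hlim := ENNReal.Tendsto.sub tendsto_const_nhds hcompl (Or.inl ENNReal.one_ne_top)
  rw [tsub_zero] at hlim
  refine hlim.congr fun n => ?_
  rw [prob_compl_eq_one_sub .of_discrete, ENNReal.sub_sub_cancel ENNReal.one_ne_top prob_le_one]
end

section
/- Fix a natural number n ≥ 1 and a real number p with 0 ≤ p ≤ 1 and p ≥ n^(-1 / C(n+1,2)), where C(·,·) denotes the binomial coefficient. Equip the space of functions f : Sym (Fin n) 3 → Bool with the product measure in which each coordinate is Bernoulli(p). Then the expected number of flexible atoms, i.e., the integral over f of the cardinality of { z : Fin n | for every s : Sym (Fin n) 3 with z ∈ s, f s = true }, is at least 1. -/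
open MeasureTheory

/-! Linearity of expectation. An atom `z` lies in exactly `C(n+1, 2)` cycles (adding `z` to any
of the `C(n+1, 2)` multisets of size 2), so it is flexible with probability `p ^ C(n+1, 2)`,
which is at least `1 / n` by the assumption on `p`. Summing over the `n` atoms gives at least `1`. -/

open Finset

namespace bernoulliBool

variable {p : ℝ}

lemma isProbabilityMeasure (hp0 : 0 ≤ p) (hp1 : p ≤ 1) :
    IsProbabilityMeasure (bernoulliBool p) := by
  constructor
  simp only [bernoulliBool, Measure.add_apply, Measure.smul_apply,
    Measure.dirac_apply_of_mem (Set.mem_univ _), ENNReal.smul_def, smul_eq_mul, mul_one]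
  rw [← ENNReal.coe_add, ← Real.toNNReal_add hp0 (by linarith)]
  norm_num

lemma apply_singleton_true : bernoulliBool p {true} = ENNReal.ofReal p := by
  simp [bernoulliBool, ENNReal.ofReal]

lemma pi_setOf_forall_eq_true {ι : Type*} [Fintype ι]
    (hp0 : 0 ≤ p) (hp1 : p ≤ 1) (q : ι → Prop) [DecidablePred q] :
    Measure.pi (fun _ : ι => bernoulliBool p) {f | ∀ i, q i → f i = true}
      = ENNReal.ofReal p ^ #{i | q i} := by
  have := isProbabilityMeasure hp0 hp1
  have hpi : {f : ι → Bool | ∀ i, q i → f i = true} = (({i | q i} : Finset ι) : Set ι).pi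
      fun _ => {true} := by
    ext f; simp [Set.mem_pi]
  rw [hpi, Measure.pi_pi_finset, apply_singleton_true, prod_const]

end bernoulliBool

lemma Sym.card_filter_mem {α : Type*} [Fintype α] [DecidableEq α] (k : ℕ) (a : α) :
    #{s : Sym α (k + 1) | a ∈ s} = (Fintype.card α).multichoose k := by
  rw [← Sym.card_sym_eq_multichoose, ← card_univ]
  exact card_bij' (fun s hs => s.erase a (by simpa using hs)) (fun t _ => a ::ₛ t)
    (fun _ _ => mem_univ _) (fun t _ => by simp [Sym.mem_cons])
    (fun _ _ => Sym.cons_erase _) (fun t _ => Sym.erase_cons_head t a)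

lemma integral_card_filter_eq_sum_measureReal {Ω ι : Type*} [MeasurableSpace Ω] [Fintype ι]
    {μ : Measure Ω} [IsFiniteMeasure μ] {P : ι → Ω → Prop} [∀ ω, DecidablePred (P · ω)]
    (hP : ∀ i, MeasurableSet {ω | P i ω}) :
    ∫ ω, (#{i | P i ω} : ℝ) ∂μ = ∑ i, μ.real {ω | P i ω} := by
  have hind (ω : Ω) : (#{i | P i ω} : ℝ) = ∑ i, {ω | P i ω}.indicator 1 ω := by
    rw [card_filter]
    push_cast
    exact sum_congr rfl fun i _ => by by_cases h : P i ω <;> simp [h]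
  simp_rw [hind]
  rw [integral_finsetSum _ fun i _ => (integrable_const 1).indicator (hP i)]
  exact sum_congr rfl fun i _ => integral_indicator_one (hP i)

lemma one_le_mul_pow_of_rpow_neg_inv_le {x p : ℝ} {K : ℕ} (hx : 0 < x) (hK : K ≠ 0)
    (hp : x ^ (-1 / (K : ℝ)) ≤ p) : 1 ≤ x * p ^ K := by
  have hroot : (x ^ (-1 / (K : ℝ))) ^ K = x⁻¹ := by
    rw [← Real.rpow_natCast, ← Real.rpow_mul hx.le, div_mul_cancel₀ _ (by exact_mod_cast hK),
      Real.rpow_neg_one]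
  calc 1 = x * (x ^ (-1 / (K : ℝ))) ^ K := by rw [hroot, mul_inv_cancel₀ hx.ne']
    _ ≤ x * p ^ K := by gcongr

theorem stmt9 (n : ℕ) (hn : 1 ≤ n) (p : ℝ) (hp0 : 0 ≤ p) (hp1 : p ≤ 1)
    (hp : p ≥ (n : ℝ) ^ (-1 / ((n + 1).choose 2 : ℝ))) :
    1 ≤ ∫ f : Sym (Fin n) 3 → Bool,
        ((Finset.univ.filter fun z : Fin n =>
            ∀ s : Sym (Fin n) 3, z ∈ s → f s = true).card : ℝ)
        ∂(cycleMeasure n p) := by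
  have := bernoulliBool.isProbabilityMeasure hp0 hp1
  have : IsProbabilityMeasure (cycleMeasure n p) := Measure.pi.instIsProbabilityMeasure _
  have hflexible (z : Fin n) : (cycleMeasure n p).real {f | ∀ s, z ∈ s → f s = true}
      = p ^ (n + 1).choose 2 := by
    have hcycles : #{s : Sym (Fin n) 3 | z ∈ s} = (n + 1).choose 2 := by
      rw [Sym.card_filter_mem, Fintype.card_fin, Nat.multichoose_eq]; rfl
    rw [measureReal_def, cycleMeasure, bernoulliBool.pi_setOf_forall_eq_true hp0 hp1,
      hcycles, ENNReal.toReal_pow, ENNReal.toReal_ofReal hp0]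
  rw [integral_card_filter_eq_sum_measureReal fun _ => .of_discrete]
  simpa [hflexible] using one_le_mul_pow_of_rpow_neg_inv_le (by exact_mod_cast hn)
    (Nat.choose_pos (by omega)).ne' hp
end
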